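/- arXiv:2111.12257 — 6 statements merged into one kernel-verified Lean document; each statement's English description precedes it below -/
import Mathlib

section
/- Let Π_A and Π_B be orthogonal projections on ℂⁿ and let ρ be a density matrix with Π_A ρ Π_A = ρ. Let P be the matrix of the orthogonal projection of ℂⁿ onto the column space of Π_A·Π_B, and suppose P ρ = ρ (ρ is supported on the range of Π_AΠ_B). Then there exists a density matrix ρ' with Π_B ρ' Π_B = ρ' and Tr(Π_A ρ') > 0 such that Π_A ρ' Π_A = Tr(Π_A ρ') • ρ; that is, ρ is exactly the state obtained from ρ' by applying the measurement of Π_A and post-selecting (renormalizing) on outcome 1. -/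
open Matrix
open scoped ComplexOrder

/-!
Write `M = Π_A Π_B`. Since the range of `P` lies in the range of `M`, there is a matrix `X` with
`M X = P`, and `Y = Π_B X` still satisfies `Π_A Y = P` while `Π_B Y = Y`. The state
`σ = Y ρ Yᴴ` is then supported on the range of `Π_B`, and `Π_A σ Π_A = P ρ Pᴴ = ρ` because
`P ρ = ρ`. Normalising `σ` by its trace gives `ρ'`; the trace is positive since `σ ≠ 0`, and
`Tr(Π_A σ) = Tr(Π_A σ Π_A) = 1`.
-/

namespace Matrix

theorem exists_mul_eq_of_range_mulVecLin_le {m n k R : Type*} [Fintype n] [Fintype k]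
    [CommSemiring R] {M : Matrix m n R} {P : Matrix m k R}
    (h : LinearMap.range P.mulVecLin ≤ LinearMap.range M.mulVecLin) :
    ∃ X : Matrix n k R, M * X = P := by
  classical
  have hcol : ∀ j, ∃ x, M *ᵥ x = P.col j := fun j => by
    simpa [mulVec_single_one] using h (LinearMap.mem_range_self P.mulVecLin (Pi.single j 1))
  choose x hx using hcol
  refine ⟨(of x)ᵀ, ?_⟩
  ext i j
  simpa [mul_apply, mulVec, dotProduct] using congr_fun (hx j) i

variable {n R 𝕜 : Type*} [Fintype n]

theorem trace_mul_mul_of_isIdempotentElem [CommSemiring R] {E : Matrix n n R}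
    (hE : IsIdempotentElem E) (σ : Matrix n n R) : (E * σ * E).trace = (E * σ).trace := by
  rw [trace_mul_comm, ← Matrix.mul_assoc, hE.eq]

section StarRing

variable [CommSemiring R] [StarRing R]

theorem IsHermitian.mul_mul_conjTranspose_mul {E : Matrix n n R} (hE : E.IsHermitian)
    (Y ρ : Matrix n n R) : E * (Y * ρ * Yᴴ) * E = (E * Y) * ρ * (E * Y)ᴴ := by
  rw [conjTranspose_mul, hE.eq]
  simp only [Matrix.mul_assoc]

theorem mul_mul_conjTranspose_eq_of_mul_eq {P ρ : Matrix n n R} (hρ : ρ.IsHermitian)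
    (hPρ : P * ρ = ρ) : P * ρ * Pᴴ = ρ := by
  conv_lhs => rw [hPρ, ← hρ.eq, ← conjTranspose_mul, hPρ]
  exact hρ.eq

end StarRing

section RCLike

variable [RCLike 𝕜]

theorem PosSemidef.trace_pos_of_ne_zero {σ : Matrix n n 𝕜} (hσ : σ.PosSemidef) (h : σ ≠ 0) :
    0 < σ.trace :=
  hσ.trace_nonneg.lt_of_ne' (mt hσ.trace_eq_zero_iff.mp h)

theorem exists_posSemidef_conj_eq_of_range_le {A B P ρ : Matrix n n 𝕜} (hA : A.IsHermitian)
    (hB : B.IsHermitian) (hBidem : IsIdempotentElem B)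
    (hrange : LinearMap.range P.mulVecLin ≤ LinearMap.range (A * B).mulVecLin)
    (hρ : ρ.PosSemidef) (hPρ : P * ρ = ρ) :
    ∃ σ : Matrix n n 𝕜, σ.PosSemidef ∧ B * σ * B = σ ∧ A * σ * A = ρ := by
  obtain ⟨X, hX⟩ := exists_mul_eq_of_range_mulVecLin_le hrange
  have hAY : A * (B * X) = P := by rw [← Matrix.mul_assoc, hX]
  have hBY : B * (B * X) = B * X := by rw [← Matrix.mul_assoc, hBidem.eq]
  refine ⟨(B * X) * ρ * (B * X)ᴴ, hρ.mul_mul_conjTranspose_same _, ?_, ?_⟩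
  · rw [hB.mul_mul_conjTranspose_mul, hBY]
  · rw [hA.mul_mul_conjTranspose_mul, hAY, mul_mul_conjTranspose_eq_of_mul_eq hρ.isHermitian hPρ]

end RCLike

end Matrix

theorem exact_pseudoinverse_general {n : ℕ}
    (PA PB P ρ : Matrix (Fin n) (Fin n) ℂ)
    (hPAher : PAᴴ = PA) (hPAidem : PA * PA = PA)
    (hPBher : PBᴴ = PB) (hPBidem : PB * PB = PB)
    (hρ : ρ.PosSemidef) (hρtr : ρ.trace = 1)
    (hPrange : LinearMap.range P.mulVecLin = LinearMap.range (PA * PB).mulVecLin)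
    (hPρ : P * ρ = ρ) :
    ∃ ρ' : Matrix (Fin n) (Fin n) ℂ,
      ρ'.PosSemidef ∧ ρ'.trace = 1 ∧
      PB * ρ' * PB = ρ' ∧
      0 < ((PA * ρ').trace).re ∧
      PA * ρ' * PA = ((PA * ρ').trace) • ρ := by
  obtain ⟨σ, hσ, hPBσ, hPAσ⟩ :=
    exists_posSemidef_conj_eq_of_range_le hPAher hPBher hPBidem hPrange.le hρ hPρ
  have hσ0 : σ ≠ 0 := by
    rintro rfl
    simp [← hPAσ] at hρtr
  have ht : 0 < σ.trace := hσ.trace_pos_of_ne_zero hσ0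
  have hPAtr : (PA * σ).trace = 1 := by
    rw [← trace_mul_mul_of_isIdempotentElem hPAidem, hPAσ, hρtr]
  have hPAtr' : (PA * (σ.trace)⁻¹ • σ).trace = (σ.trace)⁻¹ := by
    rw [Matrix.mul_smul, trace_smul, hPAtr, smul_eq_mul, mul_one]
  refine ⟨(σ.trace)⁻¹ • σ, hσ.smul (inv_pos.2 ht).le, ?_, ?_, ?_, ?_⟩
  · rw [trace_smul, smul_eq_mul, inv_mul_cancel₀ ht.ne']
  · rw [Matrix.mul_smul, Matrix.smul_mul, hPBσ]
  · rw [hPAtr']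
    exact (Complex.pos_iff.mp (inv_pos.2 ht)).1
  · rw [hPAtr', Matrix.mul_smul, Matrix.smul_mul, hPAσ]

/-- **Exact pseudoinverse state.**
Let `PA, PB` be orthogonal projections on `ℂⁿ` and `ρ` a density matrix with
`PA ρ PA = ρ`.  Let `P` be the orthogonal projection onto the column space of
`PA·PB`, and suppose `P ρ = ρ` (i.e. `ρ` is supported on the range of `PA·PB`).
Then there is a density matrix `ρ'` supported in the image of `PB`
(`PB ρ' PB = ρ'`) with `Tr(PA ρ') > 0` such that `PA ρ' PA = Tr(PA ρ') • ρ`: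
`ρ` is exactly the state obtained from `ρ'` by measuring `PA` and post-selecting
on outcome `1`. -/
theorem exact_pseudoinverse {n : ℕ}
    (PA PB P ρ : Matrix (Fin n) (Fin n) ℂ)
    (hPAher : PAᴴ = PA) (hPAidem : PA * PA = PA)
    (hPBher : PBᴴ = PB) (hPBidem : PB * PB = PB)
    (hρ : ρ.PosSemidef) (hρtr : ρ.trace = 1) (hρsupp : PA * ρ * PA = ρ)
    (hPher : Pᴴ = P) (hPidem : P * P = P)
    (hPrange : LinearMap.range P.mulVecLin = LinearMap.range (PA * PB).mulVecLin)
    (hPρ : P * ρ = ρ) :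
    ∃ ρ' : Matrix (Fin n) (Fin n) ℂ,
      ρ'.PosSemidef ∧ ρ'.trace = 1 ∧
      PB * ρ' * PB = ρ' ∧
      0 < ((PA * ρ').trace).re ∧
      PA * ρ' * PA = ((PA * ρ').trace) • ρ :=
  exact_pseudoinverse_general PA PB P ρ hPAher hPAidem hPBher hPBidem hρ hρtr hPrange hPρ
end

section
/- Let H be a finite-dimensional complex inner product space, let Π_A and Π_B be orthogonal projections on H, and suppose we are given a finite family (S_j)_{j∈J} of pairwise orthogonal subspaces of H whose sum is all of H, each invariant under both Π_A and Π_B, together with real numbers p_j ≥ 0 such that Π_B Π_A Π_B x = p_j • (Π_B x) for every j and every x ∈ S_j. Let Π_j denote the orthogonal projection onto S_j. Let p ≥ 0 be a real number and let σ be a density operator on H with Tr(Π_B σ) = 1 such that Tr(Π_j σ) = 0 for every j with p_j < p. Then Tr(Π_A σ) ≥ p. -/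
/-!
Since `σ ≥ 0` and `Tr σ = Tr (Π_B σ)`, the positive operator `(1 - Π_B) σ (1 - Π_B)` has trace
zero, hence vanishes, and so `σ = Π_B σ Π_B`. Therefore `Tr (Π_A σ) = Tr (Π_B Π_A Π_B σ)`. As
`Π_B Π_A Π_B` acts as `p_j Π_B` on `S_j`, it equals `∑ j, p_j Π_B Π_j`, which gives
`Tr (Π_A σ) = ∑ j, p_j Tr (Π_j σ)`: an average of the `p_j` with weights `Tr (Π_j σ) ≥ 0` summing
to `Tr σ = 1`, and carried only by the `j` with `p_j ≥ p`.
-/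

local notation "⟪" x ", " y "⟫" => @inner ℂ _ _ x y

variable {H : Type} [NormedAddCommGroup H] [InnerProductSpace ℂ H]

/-- `T` is a positive semidefinite (symmetric) endomorphism of `H`. -/
def IsPSD (T : H →ₗ[ℂ] H) : Prop :=
  T.IsSymmetric ∧ ∀ x : H, 0 ≤ (⟪x, T x⟫).re

/-- `ρ` is a density operator on `H`: positive semidefinite, self-adjoint, trace one. -/
def IsDensityOp [FiniteDimensional ℂ H] (ρ : H →ₗ[ℂ] H) : Prop :=
  IsPSD ρ ∧ LinearMap.trace ℂ H ρ = 1

/-- `P` is the orthogonal projection of `H` onto the subspace `S`. -/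
def IsOrthProjOnto (S : Submodule ℂ H) (P : H →ₗ[ℂ] H) : Prop :=
  P.IsSymmetric ∧ (∀ x ∈ S, P x = x) ∧ ∀ x : H, P x ∈ S

namespace LinearMap

section Trace

variable {R M : Type*} [CommRing R] [AddCommGroup M] [Module R M] [Module.Free R M]
  [Module.Finite R M]

theorem _root_.IsIdempotentElem.trace_conj {P : M →ₗ[R] M} (hP : IsIdempotentElem P)
    (T : M →ₗ[R] M) : trace R M (P ∘ₗ T ∘ₗ P) = trace R M (P ∘ₗ T) := by
  rw [trace_comp_comm', comp_assoc, show P ∘ₗ P = P from hP.eq, trace_comp_comm']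

theorem trace_comp_eq_sum_of_compression_eq {ι : Type*} {P T X : M →ₗ[R] M}
    (hTP : T ∘ₗ P = T) (hPT : P ∘ₗ T = T) {s : Finset ι} {c : ι → R} {Q : ι → M →ₗ[R] M}
    (hX : ∑ i ∈ s, (c i • P) ∘ₗ Q i = P ∘ₗ X ∘ₗ P) :
    trace R M (X ∘ₗ T) = ∑ i ∈ s, c i * trace R M (Q i ∘ₗ T) := calc
  trace R M (X ∘ₗ T) = trace R M ((P ∘ₗ X ∘ₗ P) ∘ₗ T) := by
    rw [comp_assoc, trace_comp_comm' _ P]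
    simp only [comp_assoc, hTP, hPT]
  _ = ∑ i ∈ s, c i * trace R M (Q i ∘ₗ T) := by
    rw [← hX, ← Module.End.mul_eq_comp, Finset.sum_mul, map_sum]
    refine Finset.sum_congr rfl fun i _ ↦ ?_
    rw [Module.End.mul_eq_comp, smul_comp, smul_comp, map_smul, smul_eq_mul, comp_assoc,
      trace_comp_comm' _ P, comp_assoc, hTP]

end Trace

section Positive

open RCLike
open scoped ComplexOrder

variable {𝕜 E : Type*} [RCLike 𝕜] [NormedAddCommGroup E] [InnerProductSpace 𝕜 E]

theorem IsPositive.apply_eq_zero_of_re_inner_eq_zero {T : E →ₗ[𝕜] E} (hT : T.IsPositive)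
    {x : E} (hx : re (inner 𝕜 (T x) x) = 0) : T x = 0 := by
  -- Cauchy–Schwarz for the semi-inner product `(u, v) ↦ ⟪T u, v⟫`, applied to `x` and `T x`.
  let c : PreInnerProductSpace.Core 𝕜 E :=
    { inner u v := inner 𝕜 (T u) v
      conj_inner_symm u v := by simp [hT.isSymmetric u v]
      re_inner_nonneg := hT.re_inner_nonneg_left
      add_left u v w := by simp [inner_add_left]
      smul_left u v r := by simp [inner_smul_left] }
  have hcs := @InnerProductSpace.Core.inner_mul_inner_self_le 𝕜 E _ _ _ c x (T x)
  change ‖inner 𝕜 (T x) (T x)‖ * ‖inner 𝕜 (T (T x)) x‖ ≤ re (inner 𝕜 (T x) x) * _ at hcs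
  rw [hx, zero_mul, hT.isSymmetric (T x) x] at hcs
  exact inner_self_eq_zero.mp <| norm_eq_zero.mp <| mul_self_eq_zero.mp <|
    hcs.antisymm (mul_self_nonneg _)

theorem IsPositive.trace_eq_zero_iff [FiniteDimensional 𝕜 E] {T : E →ₗ[𝕜] E}
    (hT : T.IsPositive) : T.trace 𝕜 E = 0 ↔ T = 0 := by
  refine ⟨fun h ↦ ?_, fun h ↦ h ▸ map_zero _⟩
  let b := stdOrthonormalBasis 𝕜 E
  have hsum : ∑ i, re (inner 𝕜 (T (b i)) (b i)) = 0 := by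
    simpa [trace_eq_sum_inner T b, hT.isSymmetric _] using congrArg re h
  have hzero := (Finset.sum_eq_zero_iff_of_nonneg fun i _ ↦ hT.re_inner_nonneg_left (b i)).mp hsum
  exact b.toBasis.ext fun i ↦ by
    simpa using hT.apply_eq_zero_of_re_inner_eq_zero (hzero i (Finset.mem_univ i))

theorem IsPositive.conj_isSymmetricProjection {T P : E →ₗ[𝕜] E} [FiniteDimensional 𝕜 E]
    (hT : T.IsPositive) (hP : P.IsSymmetricProjection) : (P ∘ₗ T ∘ₗ P).IsPositive := by
  simpa [hP.isSymmetric.adjoint_eq] using hT.conj_adjoint P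

theorem IsPositive.trace_comp_nonneg [FiniteDimensional 𝕜 E] {T P : E →ₗ[𝕜] E}
    (hT : T.IsPositive) (hP : P.IsSymmetricProjection) : 0 ≤ (P ∘ₗ T).trace 𝕜 E :=
  hP.isIdempotentElem.trace_conj T ▸ (hT.conj_isSymmetricProjection hP).trace_nonneg

theorem IsPositive.comp_eq_zero_of_trace_comp_eq_zero [FiniteDimensional 𝕜 E]
    {T Q : E →ₗ[𝕜] E} (hT : T.IsPositive) (hQ : Q.IsSymmetricProjection)
    (h : (Q ∘ₗ T).trace 𝕜 E = 0) : T ∘ₗ Q = 0 := by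
  have hconj_zero : Q ∘ₗ T ∘ₗ Q = 0 :=
    (hT.conj_isSymmetricProjection hQ).trace_eq_zero_iff.mp (hQ.isIdempotentElem.trace_conj T ▸ h)
  ext x
  refine hT.apply_eq_zero_of_re_inner_eq_zero ?_
  rw [← hQ.isSymmetric]
  change re (inner 𝕜 ((Q ∘ₗ T ∘ₗ Q) x) x) = 0
  simp [hconj_zero]

theorem IsPositive.comp_eq_self_of_trace_comp_eq [FiniteDimensional 𝕜 E]
    {T P : E →ₗ[𝕜] E} (hT : T.IsPositive) (hP : P.IsSymmetricProjection)
    (h : (P ∘ₗ T).trace 𝕜 E = T.trace 𝕜 E) : T ∘ₗ P = T ∧ P ∘ₗ T = T := by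
  have hQ : (1 - P).IsSymmetricProjection :=
    ⟨hP.isIdempotentElem.one_sub, IsSymmetric.id.sub hP.isSymmetric⟩
  have hTQ :=
    hT.comp_eq_zero_of_trace_comp_eq_zero hQ (by simp [sub_comp, h, Module.End.one_eq_id])
  have hTP : T ∘ₗ P = T := by
    rw [comp_sub, sub_eq_zero] at hTQ
    simpa [Module.End.one_eq_id] using hTQ.symm
  refine ⟨hTP, ?_⟩
  simpa [adjoint_comp, hT.adjoint_eq, hP.isSymmetric.adjoint_eq] using congrArg adjoint hTP

end Positive

theorem ext_of_iSup_eq_top {R M N ι : Type*} [Semiring R] [AddCommMonoid M] [Module R M]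
    [AddCommMonoid N] [Module R N] {S : ι → Submodule R M} (hS : iSup S = ⊤)
    {f g : M →ₗ[R] N} (h : ∀ i, ∀ x ∈ S i, f x = g x) : f = g :=
  ext fun _ ↦ (hS ▸ iSup_le h : ⊤ ≤ eqLocus f g) Submodule.mem_top

end LinearMap

theorem IsPSD.isPositive {T : H →ₗ[ℂ] H} (hT : IsPSD T) : T.IsPositive :=
  ⟨hT.1, fun x ↦ hT.1 x x ▸ hT.2 x⟩

namespace IsOrthProjOnto

variable {S : Submodule ℂ H} {P : H →ₗ[ℂ] H}

theorem isSymmetricProjection (hP : IsOrthProjOnto S P) : P.IsSymmetricProjection :=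
  ⟨LinearMap.ext fun x ↦ hP.2.1 _ (hP.2.2 x), hP.1⟩

theorem apply_eq_zero (hP : IsOrthProjOnto S P) {x : H} (hx : ∀ y ∈ S, ⟪y, x⟫ = 0) :
    P x = 0 :=
  inner_self_eq_zero.mp ((hP.1 (P x) x).symm.trans (hx _ (hP.2.2 (P x))))

end IsOrthProjOnto

theorem sum_comp_eq_of_orthogonal_iSup_eq_top {J M : Type*} [Fintype J] [AddCommMonoid M]
    [Module ℂ M] {S : J → Submodule ℂ H} {P : J → H →ₗ[ℂ] H}
    (horth : ∀ j j', j ≠ j' → ∀ x ∈ S j, ∀ y ∈ S j', ⟪x, y⟫ = 0) (hsup : iSup S = ⊤)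
    (hP : ∀ j, IsOrthProjOnto (S j) (P j)) {A : J → H →ₗ[ℂ] M} {B : H →ₗ[ℂ] M}
    (hAB : ∀ j, ∀ x ∈ S j, A j x = B x) : ∑ j, A j ∘ₗ P j = B := by
  classical
  refine LinearMap.ext_of_iSup_eq_top hsup fun k x hx ↦ ?_
  have hPx : ∀ j, j ≠ k → P j x = 0 := fun j hjk ↦
    (hP j).apply_eq_zero fun y hy ↦ horth j k hjk y hy x hx
  rw [LinearMap.sum_apply, Finset.sum_eq_single k (fun j _ hjk ↦ by simp [hPx j hjk])
    (by simp), LinearMap.comp_apply, (hP k).2.1 x hx, hAB k x hx]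

theorem le_sum_mul_of_sum_eq_one {ι R : Type*} [Semiring R] [LinearOrder R] [IsOrderedRing R]
    {s : Finset ι} {q t : ι → R} {p : R} (ht0 : ∀ i ∈ s, 0 ≤ t i) (ht1 : ∑ i ∈ s, t i = 1)
    (hq : ∀ i ∈ s, q i < p → t i = 0) : p ≤ ∑ i ∈ s, q i * t i := by
  calc p = ∑ i ∈ s, p * t i := by rw [← Finset.mul_sum, ht1, mul_one]
    _ ≤ ∑ i ∈ s, q i * t i := Finset.sum_le_sum fun i hi ↦ by
      rcases lt_or_ge (q i) p with hlt | hge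
      · simp [hq i hi hlt]
      · exact mul_le_mul_of_nonneg_right hge (ht0 i hi)

theorem trace_PA_ge_of_supported_on_large_jordan_subspaces_general [FiniteDimensional ℂ H]
    (PA PB : H →ₗ[ℂ] H)
    (hPBsym : PB.IsSymmetric) (hPBidem : PB ∘ₗ PB = PB)
    {J : Type} [Fintype J] (S : J → Submodule ℂ H)
    (horth : ∀ j j', j ≠ j' → ∀ x ∈ S j, ∀ y ∈ S j', ⟪x, y⟫ = 0)
    (hsup : iSup S = ⊤)
    (pj : J → ℝ)
    (hBAB : ∀ j, ∀ x ∈ S j, PB (PA (PB x)) = (pj j : ℂ) • PB x)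
    (Pj : J → (H →ₗ[ℂ] H)) (hPj : ∀ j, IsOrthProjOnto (S j) (Pj j))
    (p : ℝ)
    (σ : H →ₗ[ℂ] H) (hσ : IsDensityOp σ)
    (hσB : LinearMap.trace ℂ H (PB ∘ₗ σ) = 1)
    (hsupp : ∀ j, pj j < p → LinearMap.trace ℂ H (Pj j ∘ₗ σ) = 0) :
    p ≤ (LinearMap.trace ℂ H (PA ∘ₗ σ)).re := by
  obtain ⟨hσpsd, hσtr⟩ := hσ
  obtain ⟨hσPB, hPBσ⟩ :=
    hσpsd.isPositive.comp_eq_self_of_trace_comp_eq ⟨hPBidem, hPBsym⟩ (hσB.trans hσtr.symm)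
  have hsumP : ∑ j, Pj j = 1 := by
    simpa using sum_comp_eq_of_orthogonal_iSup_eq_top (A := fun _ ↦ LinearMap.id) (B := 1)
      horth hsup hPj fun _ _ _ ↦ rfl
  have hsumBAB : ∑ j, ((pj j : ℂ) • PB) ∘ₗ Pj j = PB ∘ₗ PA ∘ₗ PB :=
    sum_comp_eq_of_orthogonal_iSup_eq_top horth hsup hPj fun j x hx ↦ (hBAB j x hx).symm
  rw [LinearMap.trace_comp_eq_sum_of_compression_eq hσPB hPBσ hsumBAB, Complex.re_sum]
  simp_rw [Complex.re_ofReal_mul]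
  refine le_sum_mul_of_sum_eq_one (fun j _ ↦ ?_) ?_ fun j _ hj ↦ by simp [hsupp j hj]
  · exact (Complex.nonneg_iff.mp
      (hσpsd.isPositive.trace_comp_nonneg (hPj j).isSymmetricProjection)).1
  · simp_rw [← Complex.re_sum, ← map_sum, ← Module.End.mul_eq_comp, ← Finset.sum_mul, hsumP,
      one_mul, hσtr, Complex.one_re]

/-- **States supported on Jordan subspaces of value at least `p` succeed with
probability at least `p`.**
Given orthogonal projections `PA, PB` on a finite-dimensional complex inner product
space, a family of pairwise-orthogonal jointly invariant subspaces `S j` spanning `H`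
with values `p j ≥ 0` satisfying `PB PA PB x = p j • PB x` on `S j`, orthogonal
projections `Pj j` onto `S j`, and a density operator `σ` with `Tr(PB σ) = 1` and
`Tr(Pj j σ) = 0` whenever `p j < p`, one has `Tr(PA σ) ≥ p`. -/
theorem trace_PA_ge_of_supported_on_large_jordan_subspaces [FiniteDimensional ℂ H]
    (PA PB : H →ₗ[ℂ] H)
    (hPAsym : PA.IsSymmetric) (hPAidem : PA ∘ₗ PA = PA)
    (hPBsym : PB.IsSymmetric) (hPBidem : PB ∘ₗ PB = PB)
    {J : Type} [Fintype J] (S : J → Submodule ℂ H)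
    (horth : ∀ j j', j ≠ j' → ∀ x ∈ S j, ∀ y ∈ S j', ⟪x, y⟫ = 0)
    (hsup : iSup S = ⊤)
    (hinvA : ∀ j, ∀ x ∈ S j, PA x ∈ S j)
    (hinvB : ∀ j, ∀ x ∈ S j, PB x ∈ S j)
    (pj : J → ℝ) (hpj0 : ∀ j, 0 ≤ pj j)
    (hBAB : ∀ j, ∀ x ∈ S j, PB (PA (PB x)) = (pj j : ℂ) • PB x)
    (Pj : J → (H →ₗ[ℂ] H)) (hPj : ∀ j, IsOrthProjOnto (S j) (Pj j))
    (p : ℝ) (hp : 0 ≤ p)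
    (σ : H →ₗ[ℂ] H) (hσ : IsDensityOp σ)
    (hσB : LinearMap.trace ℂ H (PB ∘ₗ σ) = 1)
    (hsupp : ∀ j, pj j < p → LinearMap.trace ℂ H (Pj j ∘ₗ σ) = 0) :
    p ≤ (LinearMap.trace ℂ H (PA ∘ₗ σ)).re :=
  trace_PA_ge_of_supported_on_large_jordan_subspaces_general PA PB hPBsym hPBidem S horth hsup pj
    hBAB Pj hPj p σ hσ hσB hsupp
end

section
/- Let Π_A and Π_B be orthogonal projections on ℂⁿ and let ρ be an n×n positive semidefinite matrix with Π_A ρ = ρ. Then (Tr(Π_B ρ))² ≤ Tr(Π_A Π_B ρ Π_B) · Tr(ρ), where all three traces are nonnegative real numbers. -/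
/-!
A positive semidefinite `ρ` makes `⟪x, y⟫ = Tr(y ρ xᴴ)` a semi-inner product on matrices
(`Matrix.toMatrixInnerProductSpace`). Since `PA ρ = ρ`, the three traces are
`Tr(PB ρ) = ⟪PA PB, 1⟫`, `Tr(PA PB ρ PB) = ⟪PA PB, PA PB⟫` and `Tr ρ = ⟪1, 1⟫`,
so the inequality is Cauchy–Schwarz for this form.
-/

open Matrix
open scoped ComplexOrder

theorem Matrix.PosSemidef.norm_trace_mul_mul_conjTranspose_sq_le {𝕜 n : Type*} [RCLike 𝕜]
    [Fintype n] {ρ : Matrix n n 𝕜} (hρ : ρ.PosSemidef) (x y : Matrix n n 𝕜) :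
    ‖(y * ρ * xᴴ).trace‖ ^ 2 ≤
      RCLike.re (x * ρ * xᴴ).trace * RCLike.re (y * ρ * yᴴ).trace := by
  let := ρ.toMatrixSeminormedAddCommGroup hρ
  let := ρ.toMatrixInnerProductSpace hρ
  have := inner_mul_inner_self_le (𝕜 := 𝕜) x y
  rwa [norm_inner_symm y x, ← sq] at this

theorem trace_cauchy_schwarz_general {n : ℕ}
    (PA PB ρ : Matrix (Fin n) (Fin n) ℂ)
    (hPAher : PAᴴ = PA) (hPAidem : PA * PA = PA)
    (hPBher : PBᴴ = PB)
    (hρ : ρ.PosSemidef) (hsupp : PA * ρ = ρ) :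
    ((PB * ρ).trace).re ^ 2 ≤ ((PA * PB * ρ * PB).trace).re * (ρ.trace).re := by
  have hcs := hρ.norm_trace_mul_mul_conjTranspose_sq_le (PA * PB) 1
  have hadj : (PA * PB)ᴴ = PB * PA := by rw [conjTranspose_mul, hPAher, hPBher]
  have h_cross : (1 * ρ * (PA * PB)ᴴ).trace = (PB * ρ).trace := by
    rw [hadj, one_mul, ← mul_assoc, trace_mul_comm, ← mul_assoc, hsupp, trace_mul_comm]
  have h_diag : (PA * PB * ρ * (PA * PB)ᴴ).trace = (PA * PB * ρ * PB).trace := by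
    rw [hadj, ← mul_assoc, trace_mul_comm, ← mul_assoc, ← mul_assoc, ← mul_assoc, hPAidem]
  rw [h_cross, h_diag, one_mul, conjTranspose_one, mul_one] at hcs
  exact (sq_le_sq.mpr (by simpa using Complex.abs_re_le_norm _)).trans hcs

/-- **Cauchy–Schwarz trace inequality.**
If `PA`, `PB` are orthogonal projections on `ℂⁿ` and `ρ` is a positive semidefinite
matrix with `PA * ρ = ρ`, then `(Tr(PB ρ))² ≤ Tr(PA PB ρ PB) · Tr(ρ)`. -/
theorem trace_cauchy_schwarz {n : ℕ}
    (PA PB ρ : Matrix (Fin n) (Fin n) ℂ)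
    (hPAher : PAᴴ = PA) (hPAidem : PA * PA = PA)
    (hPBher : PBᴴ = PB) (hPBidem : PB * PB = PB)
    (hρ : ρ.PosSemidef) (hsupp : PA * ρ = ρ) :
    ((PB * ρ).trace).re ^ 2 ≤ ((PA * PB * ρ * PB).trace).re * (ρ.trace).re :=
  trace_cauchy_schwarz_general PA PB ρ hPAher hPAidem hPBher hρ hsupp
end

section
/- Let R be a finite set and k a positive integer with |R| ≥ k. If r₁, …, r_{k²} are independent uniformly random elements of R (i.e., the tuple (r₁,…,r_{k²}) is drawn uniformly from the set of all functions from {1,…,k²} to R), then the probability that the set {r₁, …, r_{k²}} contains fewer than k distinct elements is at most k · ((k−1)/k)^{k²}. -/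
/-!
A tuple with fewer than `k` distinct entries takes all its values in some `(k - 1)`-subset of
`R`, so with `n = |R|` there are at most `C(n, k - 1) (k - 1)^{k²}` of them. It remains to see
that `C(n, k - 1) / n^{k²}` is largest at `n = k`, where it equals `k / k^{k²}`. Writing
`C(n, j) / C(k, j) = ∏_{i < j} (n - i) / (k - i)` and bounding each factor by `(n / k)^k`, which is
Bernoulli's inequality `(n / k)^k ≥ 1 + (n - k)`, gives
`C(n, k - 1) / C(k, k - 1) ≤ (n / k)^{k(k - 1)} ≤ (n / k)^{k²}`.
-/

theorem Nat.sub_mul_pow_self_le_sub_mul_pow_self {j k n : ℕ} (hjk : j < k) (hkn : k ≤ n) :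
    (n - j) * k ^ k ≤ (k - j) * n ^ k := by
  obtain ⟨d, rfl⟩ := Nat.exists_eq_add_of_le hkn
  have hbernoulli : k ^ k + k ^ k * d ≤ (k + d) ^ k := by
    simpa only [Nat.cast_id, mul_pow_sub_one (by omega : k ≠ 0)] using
      pow_add_mul_le_add_pow (Nat.zero_le k) (Nat.zero_le (2 * k + d)) k
  calc (k + d - j) * k ^ k = (k - j) * k ^ k + d * k ^ k := by
        rw [show k + d - j = k - j + d by omega, add_mul]
    _ ≤ (k - j) * k ^ k + (k - j) * (k ^ k * d) := by
        rw [mul_comm d]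
        exact Nat.add_le_add_left (Nat.le_mul_of_pos_left _ (by omega)) _
    _ = (k - j) * (k ^ k + k ^ k * d) := by ring
    _ ≤ (k - j) * (k + d) ^ k := Nat.mul_le_mul_left _ hbernoulli

theorem Nat.choose_mul_pow_le_choose_mul_pow {j k n : ℕ} (hjk : j ≤ k) (hkn : k ≤ n) :
    n.choose j * k ^ (k * j) ≤ k.choose j * n ^ (k * j) := by
  induction j with
  | zero => simp
  | succ j ih =>
    refine Nat.le_of_mul_le_mul_right ?_ j.succ_pos
    calc n.choose (j + 1) * k ^ (k * (j + 1)) * (j + 1)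
        = (n.choose j * k ^ (k * j)) * ((n - j) * k ^ k) := by
          rw [mul_right_comm, Nat.choose_succ_right_eq]; ring
      _ ≤ (k.choose j * n ^ (k * j)) * ((k - j) * n ^ k) :=
          Nat.mul_le_mul (ih (by omega)) (Nat.sub_mul_pow_self_le_sub_mul_pow_self hjk hkn)
      _ = k.choose (j + 1) * n ^ (k * (j + 1)) * (j + 1) := by
          rw [mul_right_comm (k.choose (j + 1)), Nat.choose_succ_right_eq]; ring

theorem Nat.choose_pred_mul_pow_sq_le {k n : ℕ} (hk : 0 < k) (hkn : k ≤ n) :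
    n.choose (k - 1) * k ^ (k ^ 2) ≤ k * n ^ (k ^ 2) := by
  obtain ⟨j, rfl⟩ : ∃ j, k = j + 1 := ⟨k - 1, by omega⟩
  have hchoose := Nat.choose_mul_pow_le_choose_mul_pow (Nat.le_add_right j 1) hkn
  rw [Nat.choose_succ_self_right] at hchoose
  calc n.choose (j + 1 - 1) * (j + 1) ^ ((j + 1) ^ 2)
      = n.choose j * (j + 1) ^ ((j + 1) * j) * (j + 1) ^ (j + 1) := by
        rw [Nat.add_sub_cancel, mul_assoc, ← pow_add,
          show (j + 1) ^ 2 = (j + 1) * j + (j + 1) by ring]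
    _ ≤ (j + 1) * n ^ ((j + 1) * j) * n ^ (j + 1) :=
        Nat.mul_le_mul hchoose (Nat.pow_le_pow_left hkn _)
    _ = (j + 1) * n ^ ((j + 1) ^ 2) := by ring

open Finset in
theorem Fintype.card_filter_card_image_le {ι α : Type*} [Fintype ι] [DecidableEq ι] [Fintype α]
    [DecidableEq α] {j : ℕ} (hj : j ≤ Fintype.card α) :
    #{f : ι → α | #(univ.image f) ≤ j} ≤ (Fintype.card α).choose j * j ^ Fintype.card ι := by
  have hcover : ({f : ι → α | #(univ.image f) ≤ j} : Finset (ι → α))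
      ⊆ (univ.powersetCard j).biUnion fun S => Fintype.piFinset fun _ => S := by
    intro f hf
    obtain ⟨S, himage, hS⟩ := exists_superset_card_eq (mem_filter.1 hf).2 hj
    exact mem_biUnion.2 ⟨S, mem_powersetCard.2 ⟨subset_univ S, hS⟩,
      Fintype.mem_piFinset.2 fun i => himage (mem_image_of_mem f (mem_univ i))⟩
  refine (card_le_card hcover).trans (card_biUnion_le_card_mul _ _ _ fun S hS => ?_)
    |>.trans_eq (by rw [card_powersetCard, card_univ])
  rw [Fintype.card_piFinset, prod_const, card_univ, (mem_powersetCard.1 hS).2]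

/-- **Birthday-type bound for collecting `k` distinct challenges.**
If `r₁, …, r_{k²}` are independent uniformly random elements of a finite set `R`
with `|R| ≥ k ≥ 1`, the probability that `{r₁, …, r_{k²}}` contains fewer than
`k` distinct elements is at most `k · ((k−1)/k)^{k²}`. -/
theorem few_distinct_challenges_bound
    (R : Type) [Fintype R] [DecidableEq R]
    (k : ℕ) (hk : 0 < k) (hR : k ≤ Fintype.card R) :
    ((Finset.univ.filter
        (fun f : Fin (k ^ 2) → R => (Finset.univ.image f).card < k)).card : ℝ)
        / (Fintype.card (Fin (k ^ 2) → R) : ℝ)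
      ≤ (k : ℝ) * (((k : ℝ) - 1) / (k : ℝ)) ^ (k ^ 2) := by
  set n := Fintype.card R
  have hcount : (Finset.univ.filter
      (fun f : Fin (k ^ 2) → R => (Finset.univ.image f).card < k)).card
        ≤ n.choose (k - 1) * (k - 1) ^ (k ^ 2) := by
    simpa only [Fintype.card_fin, Nat.lt_iff_le_pred hk] using
      Fintype.card_filter_card_image_le (ι := Fin (k ^ 2)) ((Nat.sub_le k 1).trans hR)
  have hchoose : (n.choose (k - 1) : ℝ) / (n : ℝ) ^ (k ^ 2) ≤ (k : ℝ) / (k : ℝ) ^ (k ^ 2) := by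
    have hn : (0 : ℝ) < n := by exact_mod_cast hk.trans_le hR
    rw [div_le_div_iff₀ (by positivity) (by positivity)]
    exact_mod_cast Nat.choose_pred_mul_pow_sq_le hk hR
  have hk1 : (0 : ℝ) ≤ (k : ℝ) - 1 := sub_nonneg.2 (Nat.one_le_cast.2 hk)
  calc _ ≤ ((n.choose (k - 1) * (k - 1) ^ (k ^ 2) : ℕ) : ℝ) / (n : ℝ) ^ (k ^ 2) := by
        rw [Fintype.card_fun, Fintype.card_fin, Nat.cast_pow]
        gcongr
    _ = (n.choose (k - 1) : ℝ) / (n : ℝ) ^ (k ^ 2) * ((k : ℝ) - 1) ^ (k ^ 2) := by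
        rw [Nat.cast_mul, Nat.cast_pow, Nat.cast_pred hk]; ring
    _ ≤ (k : ℝ) / (k : ℝ) ^ (k ^ 2) * ((k : ℝ) - 1) ^ (k ^ 2) := by gcongr
    _ = (k : ℝ) * (((k : ℝ) - 1) / (k : ℝ)) ^ (k ^ 2) := by rw [div_pow]; ring
end

section
/- Let H be a finite-dimensional complex inner product space and let Π_A and Π_B be orthogonal projections on H. Then there exists a finite family (S_j)_{j∈J} of pairwise orthogonal subspaces of H whose sum is all of H such that: each S_j has dimension 1 or 2; each S_j is invariant under both Π_A and Π_B; on each one-dimensional S_j, each of Π_A and Π_B restricts either to the zero map or to the identity; and on each two-dimensional S_j there exist unit vectors v_j, w_j ∈ S_j such that Π_A x = ⟨v_j, x⟩ • v_j and Π_B x = ⟨w_j, x⟩ • w_j for every x ∈ S_j (i.e., Π_A and Π_B restrict to rank-one orthogonal projections on S_j). -/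
local notation "⟪" x ", " y "⟫" => @inner ℂ _ _ x y

/-! Every nonzero subspace `K` invariant under both projections contains a block of dimension
`1` or `2` invariant under both. Take a unit eigenvector `v` of `PA ∘ PB` inside `K ⊓ range PA`
(or, if that is `0`, a unit eigenvector of `PB` in `K`). If `PB v` is parallel to `v`, then `v`
spans a block; otherwise `span {v, PB v}` is one, and `PA`, `PB` act on it as the rank-one
projections onto `v` and `PB v / ‖PB v‖`. As the projections are self-adjoint, the orthogonal
complement of the block inside `K` is again invariant, and induction on the dimension finishes
the proof. -/

open Module Module.End Submodule LinearMap

section Jordan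

variable {H : Type*} [NormedAddCommGroup H] [InnerProductSpace ℂ H]

structure IsJordanBlock (PA PB : H →ₗ[ℂ] H) (S : Submodule ℂ H) : Prop where
  finrank_eq_one_or_two : finrank ℂ S = 1 ∨ finrank ℂ S = 2
  mapsTo : ∀ x ∈ S, PA x ∈ S ∧ PB x ∈ S
  of_finrank_eq_one : finrank ℂ S = 1 →
    ((∀ x ∈ S, PA x = 0) ∨ (∀ x ∈ S, PA x = x)) ∧
      ((∀ x ∈ S, PB x = 0) ∨ (∀ x ∈ S, PB x = x))
  of_finrank_eq_two : finrank ℂ S = 2 →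
    ∃ v w : H, v ∈ S ∧ w ∈ S ∧ ‖v‖ = 1 ∧ ‖w‖ = 1 ∧
      (∀ x ∈ S, PA x = ⟪v, x⟫ • v) ∧ (∀ x ∈ S, PB x = ⟪w, x⟫ • w)

theorem IsJordanBlock.ne_bot {PA PB : H →ₗ[ℂ] H} {S : Submodule ℂ H}
    (hS : IsJordanBlock PA PB S) : S ≠ ⊥ := by
  rintro rfl
  rcases hS.finrank_eq_one_or_two with h | h <;> simp at h

theorem Module.End.exists_unit_eigenvector_mem [FiniteDimensional ℂ H] (T : H →ₗ[ℂ] H)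
    {K : Submodule ℂ H} (hK : ∀ x ∈ K, T x ∈ K) (hK0 : K ≠ ⊥) :
    ∃ v ∈ K, ‖v‖ = 1 ∧ ∃ c : ℂ, T v = c • v := by
  have : Nontrivial K := nontrivial_iff_ne_bot.mpr hK0
  obtain ⟨c, hc⟩ := exists_eigenvalue (T.restrict hK)
  obtain ⟨a, ha, ha0⟩ := hc.exists_hasEigenvector
  have hTa : T a = c • (a : H) := congrArg Subtype.val (mem_eigenspace_iff.1 ha)
  have ha0 : (a : H) ≠ 0 := by simpa using ha0
  exact ⟨(‖(a : H)‖⁻¹ : ℂ) • (a : H), K.smul_mem _ a.2, norm_smul_inv_norm ha0, c,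
    by rw [map_smul, hTa, smul_comm]⟩

theorem IsIdempotentElem.eq_zero_or_one_of_apply_eq_smul {P : H →ₗ[ℂ] H}
    (hP : IsIdempotentElem P) {v : H} (hv : v ≠ 0) {μ : ℂ} (h : P v = μ • v) :
    μ = 0 ∨ μ = 1 :=
  hP.spectrum_subset ℂ (hasEigenvalue_of_hasEigenvector ⟨mem_eigenspace_iff.2 h, hv⟩).mem_spectrum

theorem isJordanBlock_span_singleton {PA PB : H →ₗ[ℂ] H} (hA : IsIdempotentElem PA)
    (hB : IsIdempotentElem PB) {v : H} (hv : v ≠ 0) {α β : ℂ} (hAv : PA v = α • v)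
    (hBv : PB v = β • v) : IsJordanBlock PA PB (ℂ ∙ v) := by
  have of_eigenvector : ∀ {P : H →ₗ[ℂ] H} {μ : ℂ}, IsIdempotentElem P → P v = μ • v →
      (∀ x ∈ ℂ ∙ v, P x ∈ ℂ ∙ v) ∧ ((∀ x ∈ ℂ ∙ v, P x = 0) ∨ ∀ x ∈ ℂ ∙ v, P x = x) := by
    intro P μ hP hμ
    have hPx : ∀ x ∈ ℂ ∙ v, P x = μ • x := fun x hx => mem_eigenspace_iff.1 <|
      (span_singleton_le_iff_mem _ _).2 (mem_eigenspace_iff.2 hμ) hx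
    refine ⟨fun x hx => hPx x hx ▸ smul_mem _ μ hx, ?_⟩
    rcases hP.eq_zero_or_one_of_apply_eq_smul hv hμ with rfl | rfl
    · exact Or.inl fun x hx => by rw [hPx x hx, zero_smul]
    · exact Or.inr fun x hx => by rw [hPx x hx, one_smul]
  have hdim := finrank_span_singleton (K := ℂ) hv
  obtain ⟨hA_mapsTo, hA_eq⟩ := of_eigenvector hA hAv
  obtain ⟨hB_mapsTo, hB_eq⟩ := of_eigenvector hB hBv
  exact ⟨Or.inl hdim, fun x hx => ⟨hA_mapsTo x hx, hB_mapsTo x hx⟩, fun _ => ⟨hA_eq, hB_eq⟩,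
    by omega⟩

theorem LinearMap.IsSymmetric.apply_eq_inner_smul_of_mem_span_singleton {T : H →ₗ[ℂ] H}
    (hT : T.IsSymmetric) {w : H} (hw : ‖w‖ = 1) (hTw : T w = w) {x : H}
    (hx : T x ∈ ℂ ∙ w) :
    T x = ⟪w, x⟫ • w := by
  obtain ⟨a, ha⟩ := mem_span_singleton.1 hx
  have : a = ⟪w, x⟫ := calc
    a = ⟪w, a • w⟫ := by simp [inner_self_eq_norm_sq_to_K, hw]
    _ = ⟪w, x⟫ := by rw [ha, ← hT, hTw]
  rw [← ha, this]

theorem isJordanBlock_span_pair {PA PB : H →ₗ[ℂ] H} (hA : PA.IsSymmetric) (hB : PB.IsSymmetric)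
    {v u : H} {c : ℂ} (hv : ‖v‖ = 1) (hAv : PA v = v) (hAu : PA u = c • v) (hBv : PB v = u)
    (hBu : PB u = u) (hu : u ∉ ℂ ∙ v) : IsJordanBlock PA PB (span ℂ {v, u}) := by
  have hv0 : v ≠ 0 := by rintro rfl; simp at hv
  have hu0 : u ≠ 0 := by rintro rfl; exact hu (zero_mem _)
  have hdim : finrank ℂ (span ℂ {v, u}) = 2 := by
    have hli : LinearIndependent ℂ ![v, u] := (LinearIndependent.pair_iff' hv0).2
      fun t ht => hu (ht ▸ smul_mem _ t (mem_span_singleton_self v))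
    rw [← Matrix.range_cons_cons_empty v u ![], finrank_span_eq_card hli, Fintype.card_fin]
  have hAx : ∀ x ∈ span ℂ {v, u}, PA x ∈ ℂ ∙ v := by
    intro x hx
    obtain ⟨a, b, rfl⟩ := mem_span_pair.1 hx
    rw [map_add, map_smul, map_smul, hAv, hAu, smul_smul, ← add_smul]
    exact smul_mem _ _ (mem_span_singleton_self v)
  have hBx : ∀ x ∈ span ℂ {v, u}, PB x ∈ ℂ ∙ u := by
    intro x hx
    obtain ⟨a, b, rfl⟩ := mem_span_pair.1 hx
    rw [map_add, map_smul, map_smul, hBv, hBu, ← add_smul]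
    exact smul_mem _ _ (mem_span_singleton_self u)
  have hvS : ℂ ∙ v ≤ span ℂ {v, u} := span_mono (by simp)
  have huS : ℂ ∙ u ≤ span ℂ {v, u} := span_mono (by simp)
  set w : H := (‖u‖⁻¹ : ℂ) • u
  have hw : ‖w‖ = 1 := norm_smul_inv_norm hu0
  have hspan : ℂ ∙ w = ℂ ∙ u := span_singleton_smul_eq (by simpa using hu0) u
  have hBw : PB w = w := by rw [map_smul, hBu]
  refine ⟨Or.inr hdim, fun x hx => ⟨hvS (hAx x hx), huS (hBx x hx)⟩, by omega, fun _ => ?_⟩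
  refine ⟨v, w, hvS (mem_span_singleton_self v), huS (hspan ▸ mem_span_singleton_self w),
    hv, hw,
    fun x hx => hA.apply_eq_inner_smul_of_mem_span_singleton hv hAv (hAx x hx),
    fun x hx => hB.apply_eq_inner_smul_of_mem_span_singleton hw hBw (hspan ▸ hBx x hx)⟩

theorem LinearMap.IsSymmetric.mapsTo_orthogonal {T : H →ₗ[ℂ] H} (hT : T.IsSymmetric)
    {K : Submodule ℂ H} (hK : ∀ x ∈ K, T x ∈ K) : ∀ x ∈ Kᗮ, T x ∈ Kᗮ := by
  intro x hx y hy
  rw [← hT]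
  exact hx _ (hK y hy)

theorem exists_isJordanBlock_le [FiniteDimensional ℂ H] {PA PB : H →ₗ[ℂ] H}
    (hA : PA.IsSymmetricProjection) (hB : PB.IsSymmetricProjection) {K : Submodule ℂ H}
    (hK : ∀ x ∈ K, PA x ∈ K ∧ PB x ∈ K) (hK0 : K ≠ ⊥) :
    ∃ S ≤ K, IsJordanBlock PA PB S := by
  by_cases hKA : K ⊓ range PA = ⊥
  · obtain ⟨v, hvK, hv, β, hBv⟩ :=
      exists_unit_eigenvector_mem PB (fun x hx => (hK x hx).2) hK0
    have hAv : PA v = (0 : ℂ) • v := by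
      have : PA v ∈ K ⊓ range PA := ⟨(hK v hvK).1, mem_range_self PA v⟩
      simpa [hKA] using this
    exact ⟨ℂ ∙ v, (span_singleton_le_iff_mem _ _).2 hvK, isJordanBlock_span_singleton
      hA.isIdempotentElem hB.isIdempotentElem (by rintro rfl; simp at hv) hAv hBv⟩
  · have hinv : ∀ x ∈ K ⊓ range PA, (PA ∘ₗ PB) x ∈ K ⊓ range PA :=
      fun x hx => ⟨(hK _ (hK x hx.1).2).1, mem_range_self PA _⟩
    obtain ⟨v, ⟨hvK, hvA⟩, hv, c, hc⟩ := exists_unit_eigenvector_mem _ hinv hKA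
    have hAv : PA v = v := hA.isIdempotentElem.mem_range_iff.1 hvA
    by_cases hu : PB v ∈ ℂ ∙ v
    · obtain ⟨β, hBv⟩ := mem_span_singleton.1 hu
      exact ⟨ℂ ∙ v, (span_singleton_le_iff_mem _ _).2 hvK, isJordanBlock_span_singleton
        hA.isIdempotentElem hB.isIdempotentElem (by rintro rfl; simp at hv)
        (hAv.trans (one_smul ℂ v).symm) hBv.symm⟩
    · refine ⟨span ℂ {v, PB v}, span_le.2 (by simp [Set.insert_subset_iff, hvK, (hK v hvK).2]),
        ?_⟩
      exact
        isJordanBlock_span_pair hA.isSymmetric hB.isSymmetric hv hAv hc rfl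
          (hB.isIdempotentElem.mem_range_iff.1 (mem_range_self PB v)) hu

theorem exists_orthogonal_family_isJordanBlock [FiniteDimensional ℂ H]
    {PA PB : H →ₗ[ℂ] H}
    (hA : PA.IsSymmetricProjection) (hB : PB.IsSymmetricProjection) (K : Submodule ℂ H)
    (hK : ∀ x ∈ K, PA x ∈ K ∧ PB x ∈ K) :
    ∃ (J : Type) (_ : Fintype J) (S : J → Submodule ℂ H),
      Pairwise (fun j j' => S j ⟂ S j') ∧ iSup S = K ∧ ∀ j, IsJordanBlock PA PB (S j) := by
  induction hn : finrank ℂ K using Nat.strong_induction_on generalizing K with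
  | _ n ih =>
  rcases eq_or_ne K ⊥ with rfl | hK0
  · exact ⟨Empty, inferInstance, Empty.elim, fun j => j.elim, iSup_of_empty _, fun j => j.elim⟩
  obtain ⟨S, hSK, hS⟩ := exists_isJordanBlock_le hA hB hK hK0
  set K' := Sᗮ ⊓ K
  have hA_orth := hA.isSymmetric.mapsTo_orthogonal fun y hy => (hS.mapsTo y hy).1
  have hB_orth := hB.isSymmetric.mapsTo_orthogonal fun y hy => (hS.mapsTo y hy).2
  have hK' : ∀ x ∈ K', PA x ∈ K' ∧ PB x ∈ K' := fun x hx =>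
    ⟨⟨hA_orth x hx.1, (hK x hx.2).1⟩, ⟨hB_orth x hx.1, (hK x hx.2).2⟩⟩
  have hK'K : K' < K := by
    refine inf_le_right.lt_of_ne fun h => hS.ne_bot (eq_bot_iff.2 ?_)
    calc S ≤ S ⊓ Sᗮ := le_inf le_rfl ((hSK.trans h.ge).trans inf_le_left)
      _ = ⊥ := inf_orthogonal_eq_bot S
  obtain ⟨J, _, T, hTorth, hTsup, hT⟩ := ih _ (hn ▸ finrank_lt_finrank_of_lt hK'K) K' hK' rfl
  have hST : ∀ j, S ⟂ T j := fun j =>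
    (isOrtho_orthogonal_right S).mono_right ((le_iSup T j).trans (hTsup ▸ inf_le_left))
  refine ⟨Option J, inferInstance, fun j => j.elim S T, ?_, ?_, ?_⟩
  · rintro (_ | i) (_ | j) hij
    exacts [absurd rfl hij, hST j, (hST i).symm, hTorth (fun h => hij (congrArg some h))]
  · rw [iSup_option]
    simp only [Option.elim, hTsup]
    exact sup_orthogonal_inf_of_hasOrthogonalProjection hSK
  · rintro (_ | j)
    exacts [hS, hT j]

end Jordan

/-- **Jordan's lemma.**
For any two orthogonal projections `PA, PB` on a finite-dimensional complex inner
product space `H`, there is a finite family of pairwise orthogonal subspaces `S j`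
spanning `H`, each of dimension `1` or `2` and invariant under both `PA` and `PB`,
such that on each one-dimensional `S j` each of `PA, PB` restricts to `0` or to the
identity, and on each two-dimensional `S j` both `PA` and `PB` restrict to rank-one
orthogonal projections `x ↦ ⟪v, x⟫ • v`, `x ↦ ⟪w, x⟫ • w` for unit vectors
`v, w ∈ S j`. -/
theorem jordan_lemma
    {H : Type} [NormedAddCommGroup H] [InnerProductSpace ℂ H] [FiniteDimensional ℂ H]
    (PA PB : H →ₗ[ℂ] H)
    (hPAsym : PA.IsSymmetric) (hPAidem : PA ∘ₗ PA = PA)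
    (hPBsym : PB.IsSymmetric) (hPBidem : PB ∘ₗ PB = PB) :
    ∃ (J : Type) (_ : Fintype J) (S : J → Submodule ℂ H),
      (∀ j j', j ≠ j' → ∀ x ∈ S j, ∀ y ∈ S j', ⟪x, y⟫ = 0) ∧
      iSup S = ⊤ ∧
      (∀ j, Module.finrank ℂ ↥(S j) = 1 ∨ Module.finrank ℂ ↥(S j) = 2) ∧
      (∀ j, ∀ x ∈ S j, PA x ∈ S j ∧ PB x ∈ S j) ∧
      (∀ j, Module.finrank ℂ ↥(S j) = 1 →
        ((∀ x ∈ S j, PA x = 0) ∨ (∀ x ∈ S j, PA x = x)) ∧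
        ((∀ x ∈ S j, PB x = 0) ∨ (∀ x ∈ S j, PB x = x))) ∧
      (∀ j, Module.finrank ℂ ↥(S j) = 2 →
        ∃ v w : H, v ∈ S j ∧ w ∈ S j ∧ ‖v‖ = 1 ∧ ‖w‖ = 1 ∧
          (∀ x ∈ S j, PA x = ⟪v, x⟫ • v) ∧ (∀ x ∈ S j, PB x = ⟪w, x⟫ • w)) := by
  obtain ⟨J, _, S, horth, hsup, hS⟩ := exists_orthogonal_family_isJordanBlock
    ⟨hPAidem, hPAsym⟩ ⟨hPBidem, hPBsym⟩ ⊤ fun _ _ => ⟨mem_top, mem_top⟩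
  exact ⟨J, inferInstance, S, fun j j' h => isOrtho_iff_inner_eq.1 (horth h), hsup,
    fun j => (hS j).finrank_eq_one_or_two, fun j => (hS j).mapsTo,
    fun j => (hS j).of_finrank_eq_one, fun j => (hS j).of_finrank_eq_two⟩
end

section
/- Let ρ be an n×n complex density matrix and Π an orthogonal projection on ℂⁿ, and let δ ≥ 0 be a real number such that Tr(Π ρ) ≥ 1 − δ and Tr(Π ρ) > 0. Let ρ' := (1/Tr(Π ρ)) • (Π ρ Π) be the post-measurement state after applying the binary measurement (Π, I−Π) to ρ and post-selecting on outcome 1. Then the trace distance between ρ and ρ' satisfies d(ρ, ρ') ≤ 2·√δ. -/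
/-
Write `ρ = BᴴB` and split `B = a + b` with `a = B(1 - P)`, `b = BP`. Then `ρ = (a + b)ᴴ(a + b)`,
`PρP = bᴴb`, and in Hilbert–Schmidt norm `‖b‖² = q := Tr(Pρ)`, `‖a‖² = 1 - q`. The trace norm of
the Hermitian matrix `Δ = ρ - q⁻¹ PρP` is `Re Tr(UΔ)` for the unitary `U = sign Δ`. Expanding
`Δ = aᴴa + aᴴb + bᴴa + (1 - q⁻¹) bᴴb` and bounding each `|Re Tr(U xᴴy)|` by `‖x‖ ‖y‖`
(Cauchy–Schwarz) gives `‖Δ‖₁ ≤ 2(1 - q) + 2√(q(1 - q)) ≤ 4√(1 - q) ≤ 4√δ`.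
-/

open Matrix
open scoped ComplexOrder

/-- The positive semidefinite square root of a positive semidefinite matrix, as defined in
the older Mathlib (`Matrix.PosSemidef.sqrt`, since removed). -/
noncomputable def Matrix.PosSemidef.sqrt {n : Type*} [Fintype n] [DecidableEq n] {𝕜 : Type*}
    [RCLike 𝕜] {A : Matrix n n 𝕜} (hA : A.PosSemidef) : Matrix n n 𝕜 :=
  hA.1.eigenvectorUnitary.1 * diagonal ((↑) ∘ (Real.sqrt ∘ hA.1.eigenvalues)) *
  (star hA.1.eigenvectorUnitary : Matrix n n 𝕜)

/-- The trace distance `(1/2)·Tr(((ρ−σ)²)^{1/2})` between two Hermitian matrices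
`ρ, σ`.  (For Hermitian `ρ, σ` one has `(ρ−σ)ᴴ(ρ−σ) = (ρ−σ)²`, and the square
root is the positive semidefinite square root.) -/
noncomputable def traceDist {n : ℕ} (ρ σ : Matrix (Fin n) (Fin n) ℂ) : ℝ :=
  (((Matrix.posSemidef_conjTranspose_mul_self (ρ - σ)).sqrt).trace).re / 2

namespace Matrix

variable {l m 𝕜 : Type*} [Fintype l] [Fintype m] [RCLike 𝕜]

open scoped Matrix.Norms.Frobenius

lemma frobenius_norm_eq_norm_toLp_vec (A : Matrix l m 𝕜) : ‖A‖ = ‖WithLp.toLp 2 A.vec‖ := by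
  rw [frobenius_norm_def, EuclideanSpace.norm_eq, Real.sqrt_eq_rpow, Fintype.sum_prod_type,
    Finset.sum_comm]
  simp

lemma trace_conjTranspose_mul_self_eq_frobenius_norm_sq (A : Matrix l m 𝕜) :
    (Aᴴ * A).trace = ((‖A‖ ^ 2 : ℝ) : 𝕜) := by
  rw [RCLike.ofReal_pow, frobenius_norm_eq_norm_toLp_vec, ← inner_self_eq_norm_sq_to_K,
    EuclideanSpace.inner_toLp_toLp, dotProduct_comm, star_vec_dotProduct_vec]

lemma norm_trace_conjTranspose_mul_le (A B : Matrix l m 𝕜) :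
    ‖(Aᴴ * B).trace‖ ≤ ‖A‖ * ‖B‖ := by
  rw [← star_vec_dotProduct_vec, dotProduct_comm, ← EuclideanSpace.inner_toLp_toLp,
    frobenius_norm_eq_norm_toLp_vec, frobenius_norm_eq_norm_toLp_vec]
  exact norm_inner_le_norm _ _

lemma trace_mul_mul_of_isIdempotentElem_s10 {P : Matrix m m 𝕜} (hP : IsIdempotentElem P)
    (A : Matrix m m 𝕜) : (P * A * P).trace = (P * A).trace := by
  rw [trace_mul_cycle, hP.eq]

lemma PosSemidef.re_trace_projection_mul_nonneg {ρ P : Matrix m m 𝕜} (hρ : ρ.PosSemidef)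
    (hP : P.IsHermitian) (hP' : IsIdempotentElem P) : 0 ≤ RCLike.re (P * ρ).trace := by
  have h := (hρ.conjTranspose_mul_mul_same P).trace_nonneg
  rw [hP.eq, trace_mul_mul_of_isIdempotentElem_s10 hP'] at h
  exact (RCLike.nonneg_iff.1 h).1

variable [DecidableEq m]

lemma frobenius_norm_mul_unitary (A : Matrix l m 𝕜) {U : Matrix m m 𝕜}
    (hU : U ∈ unitary (Matrix m m 𝕜)) : ‖A * U‖ = ‖A‖ := by
  have h := trace_conjTranspose_mul_self_eq_frobenius_norm_sq (A * U)
  rw [conjTranspose_mul, Matrix.mul_assoc, trace_mul_comm, Matrix.mul_assoc, Matrix.mul_assoc,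
    ← star_eq_conjTranspose, Unitary.mul_star_self_of_mem hU, Matrix.mul_one,
    trace_conjTranspose_mul_self_eq_frobenius_norm_sq, RCLike.ofReal_inj] at h
  exact (pow_left_inj₀ (norm_nonneg _) (norm_nonneg _) two_ne_zero).1 h.symm

lemma norm_trace_unitary_mul_conjTranspose_mul_le {U : Matrix m m 𝕜}
    (hU : U ∈ unitary (Matrix m m 𝕜)) (A B : Matrix l m 𝕜) :
    ‖(U * (Aᴴ * B)).trace‖ ≤ ‖A‖ * ‖B‖ := by
  have hA : U * Aᴴ = (A * star U)ᴴ := by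
    rw [conjTranspose_mul, star_eq_conjTranspose, conjTranspose_conjTranspose]
  rw [← Matrix.mul_assoc, hA, ← frobenius_norm_mul_unitary A (Unitary.star_mem hU)]
  exact norm_trace_conjTranspose_mul_le _ _

lemma PosSemidef.sqrt_eq_cfc {A : Matrix m m 𝕜} (hA : A.PosSemidef) :
    hA.sqrt = cfc Real.sqrt A := by
  rw [hA.1.cfc_eq, IsHermitian.cfc, Unitary.conjStarAlgAut_apply]
  rfl

lemma IsHermitian.sqrt_conjTranspose_mul_self {A : Matrix m m 𝕜} (hA : A.IsHermitian) :
    (posSemidef_conjTranspose_mul_self A).sqrt = cfc (|·| : ℝ → ℝ) A := by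
  rw [PosSemidef.sqrt_eq_cfc, hA.eq, ← sq, ← cfc_comp_pow _ _ _ (ha := hA.isSelfAdjoint)]
  exact cfc_congr fun x _ => Real.sqrt_sq_eq_abs x

lemma IsHermitian.exists_unitary_mul_eq_cfc_abs {A : Matrix m m 𝕜} (hA : A.IsHermitian) :
    ∃ U ∈ unitary (Matrix m m 𝕜), U * A = cfc (|·| : ℝ → ℝ) A := by
  have hcont (f : ℝ → ℝ) : ContinuousOn f (spectrum ℝ A) := A.finite_real_spectrum.continuousOn f
  -- the sign function, normalised to `1` at `0` so that `s * s = 1`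
  set s : ℝ → ℝ := fun x => if x < 0 then -1 else 1
  have hss : cfc s A * cfc s A = 1 := by
    rw [← cfc_mul s s A (hcont _) (hcont _), ← cfc_one ℝ A]
    exact cfc_congr fun x _ => by simp only [s]; split_ifs <;> norm_num
  have hsa : IsSelfAdjoint (cfc s A) := cfc_predicate s A
  refine ⟨cfc s A, ⟨by rw [hsa.star_eq, hss], by rw [hsa.star_eq, hss]⟩, ?_⟩
  calc cfc s A * A = cfc s A * cfc id A := by rw [cfc_id ℝ A hA.isSelfAdjoint]
    _ = cfc (fun x => s x * x) A := (cfc_mul s id A (hcont _) (hcont _)).symm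
    _ = cfc (|·|) A := cfc_congr fun x _ => by
      simp only [s]
      split_ifs with h
      · rw [abs_of_neg h]; ring
      · rw [abs_of_nonneg (not_lt.mp h)]; ring

noncomputable def traceNorm (A : Matrix m m 𝕜) : ℝ :=
  RCLike.re (posSemidef_conjTranspose_mul_self A).sqrt.trace

lemma IsHermitian.exists_unitary_traceNorm_eq {A : Matrix m m 𝕜} (hA : A.IsHermitian) :
    ∃ U ∈ unitary (Matrix m m 𝕜), traceNorm A = RCLike.re (U * A).trace := by
  obtain ⟨U, hU, hUA⟩ := hA.exists_unitary_mul_eq_cfc_abs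
  exact ⟨U, hU, by rw [traceNorm, hA.sqrt_conjTranspose_mul_self, hUA]⟩

theorem traceNorm_conjTranspose_mul_self_sub_smul_le (a b : Matrix l m 𝕜) (s : ℝ) :
    traceNorm ((a + b)ᴴ * (a + b) - (s : 𝕜) • (bᴴ * b)) ≤
      ‖a‖ ^ 2 + 2 * ‖a‖ * ‖b‖ + |1 - s| * ‖b‖ ^ 2 := by
  have hherm : ((a + b)ᴴ * (a + b) - (s : 𝕜) • (bᴴ * b)).IsHermitian :=
    (isHermitian_conjTranspose_mul_self _).sub
      ((isHermitian_conjTranspose_mul_self b).smul (RCLike.conj_ofReal s))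
  obtain ⟨U, hU, htn⟩ := hherm.exists_unitary_traceNorm_eq
  have hre (x y : Matrix l m 𝕜) : |RCLike.re (U * (xᴴ * y)).trace| ≤ ‖x‖ * ‖y‖ :=
    (RCLike.abs_re_le_norm _).trans (norm_trace_unitary_mul_conjTranspose_mul_le hU x y)
  have hexpand : (a + b)ᴴ * (a + b) - (s : 𝕜) • (bᴴ * b) =
      aᴴ * a + aᴴ * b + bᴴ * a + ((1 - s : ℝ) : 𝕜) • (bᴴ * b) := by
    simp only [conjTranspose_add, Matrix.add_mul, Matrix.mul_add, RCLike.ofReal_sub,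
      RCLike.ofReal_one, sub_smul, one_smul]
    abel
  rw [htn, hexpand]
  simp only [Matrix.mul_add, Matrix.mul_smul, trace_add, trace_smul, smul_eq_mul, map_add,
    RCLike.re_ofReal_mul]
  have hbb : (1 - s) * RCLike.re (U * (bᴴ * b)).trace ≤ |1 - s| * ‖b‖ ^ 2 := by
    rw [sq]
    exact (le_abs_self _).trans (abs_mul (1 - s) _ ▸ by gcongr; exact hre b b)
  linarith [(abs_le.1 (hre a a)).2, (abs_le.1 (hre a b)).2, (abs_le.1 (hre b a)).2]

open scoped MatrixOrder in
lemma PosSemidef.exists_eq_conjTranspose_mul_self {A : Matrix m m 𝕜} (hA : A.PosSemidef) :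
    ∃ B : Matrix m m 𝕜, A = Bᴴ * B :=
  ⟨CFC.sqrt A, by
    rw [← star_eq_conjTranspose, (CFC.sqrt_nonneg A).isSelfAdjoint.star_eq,
      CFC.sqrt_mul_sqrt_self A hA.nonneg]⟩

lemma PosSemidef.re_trace_projection_mul_mem_Icc {ρ P : Matrix m m 𝕜} (hρ : ρ.PosSemidef)
    (hP : P.IsHermitian) (hP' : IsIdempotentElem P) :
    RCLike.re (P * ρ).trace ∈ Set.Icc 0 (RCLike.re ρ.trace) := by
  have h := hρ.re_trace_projection_mul_nonneg (isHermitian_one.sub hP) hP'.one_sub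
  rw [Matrix.sub_mul, Matrix.one_mul, trace_sub, map_sub] at h
  exact ⟨hρ.re_trace_projection_mul_nonneg hP hP', by linarith⟩

theorem PosSemidef.traceNorm_sub_inv_trace_smul_compress_le {ρ P : Matrix m m 𝕜}
    (hρ : ρ.PosSemidef) (hρtr : ρ.trace = 1) (hP : P.IsHermitian) (hP' : IsIdempotentElem P) :
    traceNorm (ρ - ((P * ρ).trace)⁻¹ • (P * ρ * P)) ≤
      2 * (1 - RCLike.re (P * ρ).trace) +
        2 * √(1 - RCLike.re (P * ρ).trace) * √(RCLike.re (P * ρ).trace) := by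
  obtain ⟨hq0, hq1⟩ := hρ.re_trace_projection_mul_mem_Icc hP hP'
  obtain ⟨B, rfl⟩ := hρ.exists_eq_conjTranspose_mul_self
  set q := RCLike.re (P * (Bᴴ * B)).trace with hq
  rw [hρtr, RCLike.one_re] at hq1
  have hcompress {Q : Matrix m m 𝕜} (hQ : Q.IsHermitian) :
      (B * Q)ᴴ * (B * Q) = Q * (Bᴴ * B) * Q := by
    rw [conjTranspose_mul, hQ.eq, Matrix.mul_assoc, Matrix.mul_assoc, Matrix.mul_assoc]
  have hb : (P * (Bᴴ * B)).trace = ((‖B * P‖ ^ 2 : ℝ) : 𝕜) := by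
    rw [← trace_mul_mul_of_isIdempotentElem_s10 hP', ← hcompress hP,
      trace_conjTranspose_mul_self_eq_frobenius_norm_sq]
  have hp : (P * (Bᴴ * B)).trace = (q : 𝕜) := by rw [hq, hb, RCLike.ofReal_re]
  have hnb : ‖B * P‖ = √q := by
    rw [hq, hb, RCLike.ofReal_re, Real.sqrt_sq (norm_nonneg _)]
  have hna : ‖B * (1 - P)‖ = √(1 - q) := by
    have ha := trace_conjTranspose_mul_self_eq_frobenius_norm_sq (B * (1 - P))
    rw [hcompress (isHermitian_one.sub hP), trace_mul_mul_of_isIdempotentElem_s10 hP'.one_sub,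
      Matrix.sub_mul, Matrix.one_mul, trace_sub, hρtr] at ha
    rw [← Real.sqrt_sq (norm_nonneg (B * (1 - P))), ← RCLike.ofReal_re (K := 𝕜) (_ ^ 2), ← ha,
      map_sub, RCLike.one_re]
  have hsplit : Bᴴ * B = (B * (1 - P) + B * P)ᴴ * (B * (1 - P) + B * P) := by
    rw [← Matrix.mul_add, sub_add_cancel, Matrix.mul_one]
  -- also at `q = 0`, where `q⁻¹ = 0` and the post-measurement matrix is `0`
  have hinv : |1 - q⁻¹| * q ≤ 1 - q := by
    rcases hq0.eq_or_lt with h | h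
    · simp [← h]
    · rw [abs_of_nonpos (sub_nonpos.2 (one_le_inv₀ h |>.2 hq1)), neg_sub, sub_mul,
        inv_mul_cancel₀ h.ne', one_mul]
  rw [hp, ← RCLike.ofReal_inv, ← hcompress hP, hsplit]
  refine (traceNorm_conjTranspose_mul_self_sub_smul_le _ _ _).trans ?_
  rw [hna, hnb, Real.sq_sqrt hq0, Real.sq_sqrt (sub_nonneg.2 hq1)]
  linarith

end Matrix

theorem gentle_measurement_general {n : ℕ}
    (ρ P : Matrix (Fin n) (Fin n) ℂ)
    (hρ : ρ.PosSemidef) (hρtr : ρ.trace = 1)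
    (hPher : Pᴴ = P) (hPidem : P * P = P)
    (δ : ℝ)
    (h1 : 1 - δ ≤ ((P * ρ).trace).re) :
    traceDist ρ (((P * ρ).trace)⁻¹ • (P * ρ * P)) ≤ 2 * Real.sqrt δ := by
  obtain ⟨hq0, hq1⟩ := hρ.re_trace_projection_mul_mem_Icc hPher hPidem
  have hbound := hρ.traceNorm_sub_inv_trace_smul_compress_le hρtr hPher hPidem
  simp only [hρtr, RCLike.re_to_complex, Complex.one_re] at hq0 hq1 hbound
  set q := ((P * ρ).trace).re
  calc traceDist ρ (((P * ρ).trace)⁻¹ • (P * ρ * P))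
      = traceNorm (ρ - ((P * ρ).trace)⁻¹ • (P * ρ * P)) / 2 := rfl
    _ ≤ (1 - q) + √(1 - q) * √q := by linarith
    _ ≤ √(1 - q) + √(1 - q) := by
      gcongr
      · exact Real.le_sqrt_self_iff.2 (by linarith)
      · exact mul_le_of_le_one_right (Real.sqrt_nonneg _) (Real.sqrt_le_one.2 hq1)
    _ ≤ 2 * √δ := by linarith [Real.sqrt_le_sqrt (show 1 - q ≤ δ by linarith)]

/-- **Gentle measurement lemma.**
If `ρ` is a density matrix, `P` an orthogonal projection with `Tr(P ρ) ≥ 1 − δ`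
and `Tr(P ρ) > 0`, then the post-measurement state `ρ' = (Tr(P ρ))⁻¹ • (P ρ P)`
obtained by post-selecting on outcome `1` satisfies `d(ρ, ρ') ≤ 2√δ`. -/
theorem gentle_measurement {n : ℕ}
    (ρ P : Matrix (Fin n) (Fin n) ℂ)
    (hρ : ρ.PosSemidef) (hρtr : ρ.trace = 1)
    (hPher : Pᴴ = P) (hPidem : P * P = P)
    (δ : ℝ) (hδ : 0 ≤ δ)
    (h1 : 1 - δ ≤ ((P * ρ).trace).re) (h2 : 0 < ((P * ρ).trace).re) :
    traceDist ρ (((P * ρ).trace)⁻¹ • (P * ρ * P)) ≤ 2 * Real.sqrt δ :=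
  gentle_measurement_general ρ P hρ hρtr hPher hPidem δ h1
end
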